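/- arXiv:2605.02232 — 2 statements merged into one kernel-verified Lean document; each statement's English description precedes it below -/
import Mathlib

section
/- Let q be a polynomial on ℝ^d. Then for (v,p) with v ∈ S^{d-1}, p ⊥ v, the function ∫_ℝ e^{-t²} q(p+tv) dt equals √π q(p) plus a finite sum of terms of the form q̃(p) r̃(v) where q̃, r̃ are polynomials on ℝ^d with deg q̃ < deg q. -/
open Real MeasureTheory
open scoped RealInnerProductSpace

private lemma integrable_gauss : Integrable fun t : ℝ => Real.exp (-t ^ 2) := by
  simpa using integrable_exp_neg_mul_sq (one_pos)

private lemma integrable_pow_mul_gauss (k : ℕ) :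
    Integrable fun t : ℝ => t ^ k * Real.exp (-t ^ 2) := by
  have hint : Integrable fun t : ℝ => ((Nat.factorial k : ℝ) * Real.exp (1 / 2)) * Real.exp (-(1 / 2) * t ^ 2) :=
    (integrable_exp_neg_mul_sq (by norm_num)).const_mul _
  refine hint.mono' ?_ ?_
  · exact (Continuous.mul (continuous_pow k)
      ((Real.continuous_exp).comp (continuous_pow 2).neg)).aestronglyMeasurable
  · filter_upwards with t
    have h1 : |t| ^ k ≤ (Nat.factorial k : ℝ) * Real.exp |t| := by
      have := Real.pow_div_factorial_le_exp |t| (abs_nonneg t) k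
      have hk : (0:ℝ) < (Nat.factorial k : ℝ) := by positivity
      rw [div_le_iff₀ hk] at this
      linarith [this]
    have h2 : |t| ≤ 1 / 2 + (1 / 2) * t ^ 2 := by
      nlinarith [sq_nonneg (|t| - 1), sq_abs t]
    have h3 : Real.exp |t| ≤ Real.exp (1 / 2 + (1 / 2) * t ^ 2) := Real.exp_le_exp.mpr h2
    have habs : ‖t ^ k * Real.exp (-t ^ 2)‖ = |t| ^ k * Real.exp (-t ^ 2) := by
      rw [norm_mul, norm_pow, Real.norm_eq_abs, Real.norm_eq_abs,
        abs_of_pos (Real.exp_pos _)]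
    rw [habs]
    have hexp : Real.exp (1 / 2 + (1 / 2) * t ^ 2) * Real.exp (-t ^ 2)
        = Real.exp (1 / 2) * Real.exp (-(1 / 2) * t ^ 2) := by
      rw [← Real.exp_add, ← Real.exp_add]; ring_nf
    calc |t| ^ k * Real.exp (-t ^ 2)
        ≤ ((Nat.factorial k : ℝ) * Real.exp |t|) * Real.exp (-t ^ 2) := by
          exact mul_le_mul_of_nonneg_right h1 (Real.exp_pos _).le
      _ ≤ ((Nat.factorial k : ℝ) * Real.exp (1 / 2 + (1 / 2) * t ^ 2)) * Real.exp (-t ^ 2) := by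
          have hk : (0:ℝ) ≤ (Nat.factorial k : ℝ) := by positivity
          exact mul_le_mul_of_nonneg_right (mul_le_mul_of_nonneg_left h3 hk) (Real.exp_pos _).le
      _ = ((Nat.factorial k : ℝ) * Real.exp (1 / 2)) * Real.exp (-(1 / 2) * t ^ 2) := by
          rw [mul_assoc, hexp]; ring

private lemma gauss_integral : (∫ t : ℝ, Real.exp (-t ^ 2)) = Real.sqrt π := by
  have := integral_gaussian 1
  simpa using this

/-- Algebraic expansion claim: `q(x + t y) = q(x) + ∑ᵢ qtᵢ(x) rtᵢ(y) tᵏⁱ` with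
`deg qtᵢ + kᵢ ≤ N` and `kᵢ ≥ 1`. -/
private def XClaim (d N : ℕ) (q : MvPolynomial (Fin d) ℝ) : Prop :=
  q.totalDegree ≤ N ∧
  ∃ (ι : Type) (_ : Fintype ι) (qt rt : ι → MvPolynomial (Fin d) ℝ) (k : ι → ℕ),
    (∀ i, (qt i).totalDegree + k i ≤ N ∧ 1 ≤ k i) ∧
    ∀ (x y : Fin d → ℝ) (t : ℝ),
      MvPolynomial.eval (fun i => x i + t * y i) q =
        MvPolynomial.eval x q +
          ∑ i, MvPolynomial.eval x (qt i) * MvPolynomial.eval y (rt i) * t ^ (k i)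

private lemma xclaim_mono {d N M : ℕ} {q : MvPolynomial (Fin d) ℝ} (hNM : N ≤ M)
    (h : XClaim d N q) : XClaim d M q := by
  obtain ⟨hd, ι, hι, qt, rt, k, hc, he⟩ := h
  exact ⟨hd.trans hNM, ι, hι, qt, rt, k, fun i => ⟨(hc i).1.trans hNM, (hc i).2⟩, he⟩

private lemma xclaim_C {d : ℕ} (c : ℝ) : XClaim d 0 (MvPolynomial.C c) := by
  refine ⟨le_of_eq (MvPolynomial.totalDegree_C c), Empty, inferInstance,
    Empty.elim, Empty.elim, Empty.elim, fun i => i.elim, fun x y t => ?_⟩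
  simp

private lemma xclaim_X {d : ℕ} (i : Fin d) : XClaim d 1 (MvPolynomial.X i) := by
  refine ⟨(MvPolynomial.totalDegree_X i).le, Unit, inferInstance,
    fun _ => 1, fun _ => MvPolynomial.X i, fun _ => 1, fun _ => by simp, fun x y t => ?_⟩
  simp [mul_comm]

private lemma xclaim_mul {d N M : ℕ} {q q' : MvPolynomial (Fin d) ℝ}
    (h : XClaim d N q) (h' : XClaim d M q') : XClaim d (N + M) (q * q') := by
  obtain ⟨hdq, ι, _, qt, rt, k, hc, he⟩ := h
  obtain ⟨hdq', ι', _, qt', rt', k', hc', he'⟩ := h'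
  refine ⟨(MvPolynomial.totalDegree_mul q q').trans (add_le_add hdq hdq'),
    ι ⊕ ι' ⊕ ι × ι', inferInstance,
    Sum.elim (fun i => qt i * q') (Sum.elim (fun j => q * qt' j) fun ij => qt ij.1 * qt' ij.2),
    Sum.elim (fun i => rt i) (Sum.elim (fun j => rt' j) fun ij => rt ij.1 * rt' ij.2),
    Sum.elim (fun i => k i) (Sum.elim (fun j => k' j) fun ij => k ij.1 + k' ij.2), ?_, ?_⟩
  · rintro (i | j | ⟨i, j⟩)
    · exact ⟨le_trans (Nat.add_le_add_right (MvPolynomial.totalDegree_mul (qt i) q') (k i))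
        (by have h2 := (hc i).1; omega), (hc i).2⟩
    · exact ⟨le_trans (Nat.add_le_add_right (MvPolynomial.totalDegree_mul q (qt' j)) (k' j))
        (by have h2 := (hc' j).1; omega), (hc' j).2⟩
    · exact ⟨le_trans (Nat.add_le_add_right (MvPolynomial.totalDegree_mul (qt i) (qt' j)) (k i + k' j))
        (by have h2 := (hc i).1; have h3 := (hc' j).1; omega),
        le_trans (hc i).2 (Nat.le_add_right _ _)⟩
  · intro x y t
    have e1 := he x y t
    have e2 := he' x y t
    rw [map_mul, e1, e2, map_mul]
    rw [Fintype.sum_sum_type, Fintype.sum_sum_type, Fintype.sum_prod_type]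
    simp only [Sum.elim_inl, Sum.elim_inr, map_mul]
    set A := MvPolynomial.eval x q
    set B := MvPolynomial.eval x q'
    have hS1 : (∑ i, MvPolynomial.eval x (qt i) * B * MvPolynomial.eval y (rt i) * t ^ k i)
        = (∑ i, MvPolynomial.eval x (qt i) * MvPolynomial.eval y (rt i) * t ^ k i) * B := by
      rw [Finset.sum_mul]; exact Finset.sum_congr rfl fun i _ => by ring
    have hS2 : (∑ j, A * MvPolynomial.eval x (qt' j) * MvPolynomial.eval y (rt' j) * t ^ k' j)
        = A * (∑ j, MvPolynomial.eval x (qt' j) * MvPolynomial.eval y (rt' j) * t ^ k' j) := by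
      rw [Finset.mul_sum]; exact Finset.sum_congr rfl fun j _ => by ring
    have hS3 : (∑ i, ∑ j, MvPolynomial.eval x (qt i) * MvPolynomial.eval x (qt' j) *
          (MvPolynomial.eval y (rt i) * MvPolynomial.eval y (rt' j)) * t ^ (k i + k' j))
        = (∑ i, MvPolynomial.eval x (qt i) * MvPolynomial.eval y (rt i) * t ^ k i) *
          (∑ j, MvPolynomial.eval x (qt' j) * MvPolynomial.eval y (rt' j) * t ^ k' j) := by
      rw [Finset.sum_mul_sum]
      exact Finset.sum_congr rfl fun i _ => Finset.sum_congr rfl fun j _ => by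
        rw [pow_add]; ring
    rw [hS1, hS2, hS3]
    ring

private lemma xclaim_add {d N : ℕ} {q q' : MvPolynomial (Fin d) ℝ}
    (h : XClaim d N q) (h' : XClaim d N q') : XClaim d N (q + q') := by
  obtain ⟨hdq, ι, _, qt, rt, k, hc, he⟩ := h
  obtain ⟨hdq', ι', _, qt', rt', k', hc', he'⟩ := h'
  refine ⟨(MvPolynomial.totalDegree_add q q').trans (max_le hdq hdq'),
    ι ⊕ ι', inferInstance, Sum.elim qt qt', Sum.elim rt rt', Sum.elim k k', ?_, ?_⟩
  · rintro (i | j)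
    · exact hc i
    · exact hc' j
  · intro x y t
    rw [map_add, he x y t, he' x y t, map_add, Fintype.sum_sum_type]
    simp only [Sum.elim_inl, Sum.elim_inr]
    ring

private lemma xclaim_zero {d N : ℕ} : XClaim d N (0 : MvPolynomial (Fin d) ℝ) := by
  have := xclaim_mono (Nat.zero_le N) (xclaim_C (d := d) 0)
  simpa using this

private lemma xclaim_pow {d : ℕ} (i : Fin d) (n : ℕ) :
    XClaim d n ((MvPolynomial.X i : MvPolynomial (Fin d) ℝ) ^ n) := by
  induction n with
  | zero =>
    have := xclaim_C (d := d) 1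
    simpa using this
  | succ n ih =>
    have := xclaim_mul ih (xclaim_X i)
    rwa [pow_succ]

private lemma xclaim_prod {d : ℕ} (a : Fin d →₀ ℕ) (s : Finset (Fin d)) :
    XClaim d (∑ i ∈ s, a i) (∏ i ∈ s, (MvPolynomial.X i : MvPolynomial (Fin d) ℝ) ^ a i) := by
  induction s using Finset.cons_induction with
  | empty => simpa using xclaim_C (d := d) 1
  | cons i s his ih =>
    rw [Finset.prod_cons, Finset.sum_cons]
    exact xclaim_mul (xclaim_pow i (a i)) ih

private lemma xclaim_monomial {d : ℕ} (a : Fin d →₀ ℕ) (c : ℝ) :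
    XClaim d (a.sum fun _ e => e) (MvPolynomial.monomial a c) := by
  have h1 : (MvPolynomial.monomial a c : MvPolynomial (Fin d) ℝ)
      = MvPolynomial.C c * ∏ i ∈ a.support, (MvPolynomial.X i : MvPolynomial (Fin d) ℝ) ^ a i :=
    MvPolynomial.monomial_eq
  have h2 : (a.sum fun _ e => e) = ∑ i ∈ a.support, a i := rfl
  rw [h1, h2]
  have := xclaim_mul (xclaim_C (d := d) c) (xclaim_prod a a.support)
  simpa using this

private lemma xclaim_sum {d N : ℕ} {α : Type*} (s : Finset α) (f : α → MvPolynomial (Fin d) ℝ)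
    (hf : ∀ a ∈ s, XClaim d N (f a)) : XClaim d N (∑ a ∈ s, f a) := by
  induction s using Finset.cons_induction with
  | empty => simpa using xclaim_zero
  | cons i s his ih =>
    rw [Finset.sum_cons]
    exact xclaim_add (hf i (Finset.mem_cons_self i s)) (ih fun a ha => hf a (Finset.mem_cons_of_mem ha))

private lemma xclaim_total {d : ℕ} (q : MvPolynomial (Fin d) ℝ) :
    XClaim d q.totalDegree q := by
  have hq : (∑ a ∈ q.support, MvPolynomial.monomial a (q.coeff a)) = q :=
    MvPolynomial.support_sum_monomial_coeff q
  have h2 : XClaim d q.totalDegree (∑ a ∈ q.support, MvPolynomial.monomial a (q.coeff a)) :=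
    xclaim_sum _ _ fun a ha =>
      xclaim_mono (MvPolynomial.le_totalDegree ha) (xclaim_monomial a (q.coeff a))
  rwa [hq] at h2

/-- Mapping property of the Gaussian-weighted X-ray transform on polynomials:
`∫ e^{-t²} q(p+tv) dt = √π q(p) + Σᵢ q̃ᵢ(p) r̃ᵢ(v)` where each `q̃ᵢ` has degree
strictly less than `deg q`. -/
theorem weighted_xray_polynomial_mapping (d : ℕ) (q : MvPolynomial (Fin d) ℝ) :
    ∃ (n : ℕ) (qt rt : Fin n → MvPolynomial (Fin d) ℝ),
      (∀ i, (qt i).totalDegree < q.totalDegree) ∧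
      ∀ v p : EuclideanSpace ℝ (Fin d), ‖v‖ = 1 → ⟪v, p⟫ = 0 →
        (∫ t : ℝ, Real.exp (-t ^ 2) * MvPolynomial.eval (fun i => p i + t * v i) q) =
          Real.sqrt π * MvPolynomial.eval (fun i => p i) q +
            ∑ i, MvPolynomial.eval (fun j => p j) (qt i) *
              MvPolynomial.eval (fun j => v j) (rt i) := by
  obtain ⟨-, ι, hι, qt, rt, k, hc, he⟩ := xclaim_total q
  set Mo : ℕ → ℝ := fun j => ∫ t : ℝ, t ^ j * Real.exp (-t ^ 2) with hMo
  let e := (Fintype.equivFin ι)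
  refine ⟨Fintype.card ι, fun i => qt (e.symm i),
    fun i => MvPolynomial.C (Mo (k (e.symm i))) * rt (e.symm i), ?_, ?_⟩
  · intro i
    show (qt (e.symm i)).totalDegree < q.totalDegree
    have h1 := (hc (e.symm i)).1
    have h2 := (hc (e.symm i)).2
    omega
  · intro v p _ _
    have hswap : ∀ t : ℝ,
        Real.exp (-t ^ 2) * MvPolynomial.eval (fun i => p i + t * v i) q =
          MvPolynomial.eval (fun i => p i) q * Real.exp (-t ^ 2) +
            ∑ i, (MvPolynomial.eval (fun j => p j) (qt i) * MvPolynomial.eval (fun j => v j) (rt i))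
              * (t ^ (k i) * Real.exp (-t ^ 2)) := by
      intro t
      rw [he (fun i => p i) (fun i => v i) t]
      rw [mul_add, Finset.mul_sum]
      congr 1
      · ring
      · exact Finset.sum_congr rfl fun i _ => by ring
    rw [MeasureTheory.integral_congr_ae (Filter.Eventually.of_forall hswap)]
    have hint0 : Integrable fun t : ℝ =>
        MvPolynomial.eval (fun i => p i) q * Real.exp (-t ^ 2) :=
      integrable_gauss.const_mul _
    have hinti : ∀ i : ι, Integrable fun t : ℝ =>
        (MvPolynomial.eval (fun j => p j) (qt i) * MvPolynomial.eval (fun j => v j) (rt i))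
          * (t ^ (k i) * Real.exp (-t ^ 2)) :=
      fun i => (integrable_pow_mul_gauss (k i)).const_mul _
    rw [MeasureTheory.integral_add hint0 (integrable_finset_sum _ fun i _ => hinti i),
      MeasureTheory.integral_finset_sum _ fun i _ => hinti i]
    simp only [MeasureTheory.integral_const_mul]
    rw [gauss_integral]
    congr 1
    · ring
    · refine Fintype.sum_equiv e _ _ fun x => ?_
      simp only [Equiv.symm_apply_apply, map_mul, MvPolynomial.eval_C, hMo]
      ring
end

section
/- The X-ray transform intertwines with translation/derivative vector fields: with P_i = ∂_{p_i} − v_i(v·∂_p), for every Schwartz function f on ℝ^d, P_i(I₀ f)(v,p) = I₀(∂_{z_i} f)(v,p) for all (v,p) ∈ 𝒢. Moreover (p·∂_p)(I₀ f) = I₀((ρ∂_ρ + 1) f). -/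
open Real MeasureTheory SchwartzMap
open scoped RealInnerProductSpace

set_option maxHeartbeats 2000000 in
/-- The X-ray transform `I₀ f(v,p) = ∫ f(p+tv) dt` intertwines with derivatives:
`P_i (I₀ f) = I₀ (∂_{z_i} f)` where `P_i = ∂_{p_i} − v_i(v·∂_p)`, and
`(p·∂_p)(I₀ f) = I₀ ((ρ∂_ρ + 1) f)`. -/
theorem xray_derivative_intertwine (d : ℕ)
    (f : 𝓢(EuclideanSpace ℝ (Fin d), ℂ))
    (v p : EuclideanSpace ℝ (Fin d)) (hv : ‖v‖ = 1) (hvp : ⟪v, p⟫ = 0) :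
    (∀ i : Fin d,
      fderiv ℝ (fun q => ∫ t : ℝ, f (q + t • v)) p (EuclideanSpace.single i 1) -
          (v i : ℂ) * fderiv ℝ (fun q => ∫ t : ℝ, f (q + t • v)) p v =
        ∫ t : ℝ, fderiv ℝ f (p + t • v) (EuclideanSpace.single i 1)) ∧
    fderiv ℝ (fun q => ∫ t : ℝ, f (q + t • v)) p p =
      ∫ t : ℝ, (fderiv ℝ f (p + t • v) (p + t • v) + f (p + t • v)) := by
  classical
  -- Schwartz decay with power 3, for the function and its derivative
  obtain ⟨C, hC⟩ : ∃ C : ℝ, ∀ n ≤ 1, ∀ x : EuclideanSpace ℝ (Fin d),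
      (1 + ‖x‖) ^ 3 * ‖iteratedFDeriv ℝ n (⇑f) x‖ ≤ C :=
    ⟨2 ^ 3 * (Finset.Iic ((3:ℕ),(1:ℕ))).sup (fun m => SchwartzMap.seminorm ℝ m.1 m.2) f,
      fun n hn x => one_add_le_sup_seminorm_apply (m := ((3:ℕ),(1:ℕ))) le_rfl hn f x⟩
  have hC0 : 0 ≤ C := le_trans (by positivity) (hC 0 (by norm_num) 0)
  have hdecay0 : ∀ x : EuclideanSpace ℝ (Fin d), (1 + ‖x‖) ^ 3 * ‖f x‖ ≤ C := fun x => by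
    simpa [norm_iteratedFDeriv_zero] using hC 0 (by norm_num) x
  have hdecay1 : ∀ x : EuclideanSpace ℝ (Fin d), (1 + ‖x‖) ^ 3 * ‖fderiv ℝ (⇑f) x‖ ≤ C := fun x => by
    have h := hC 1 le_rfl x
    rwa [show ‖iteratedFDeriv ℝ 1 (⇑f) x‖ = ‖fderiv ℝ (⇑f) x‖ by
      rw [← norm_iteratedFDeriv_fderiv, norm_iteratedFDeriv_zero]] at h
  -- geometry on the ball
  have hgeom : ∀ q ∈ Metric.ball p (1:ℝ), ∀ t : ℝ,
      1 + |t| ≤ (2 + ‖p‖) * (1 + ‖q + t • v‖) := by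
    intro q hq t
    have hq1 : ‖q - p‖ < 1 := mem_ball_iff_norm.mp hq
    have hq2 : ‖q‖ ≤ ‖p‖ + 1 := by
      calc ‖q‖ = ‖(q - p) + p‖ := by rw [sub_add_cancel]
        _ ≤ ‖q - p‖ + ‖p‖ := norm_add_le _ _
        _ ≤ ‖p‖ + 1 := by linarith
    have h2 : |t| = ‖t • v‖ := by
      rw [norm_smul, hv, mul_one, Real.norm_eq_abs]
    have h3 : |t| ≤ ‖q + t • v‖ + ‖q‖ := by
      rw [h2]
      calc ‖t • v‖ = ‖(q + t • v) - q‖ := by rw [add_sub_cancel_left]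
        _ ≤ ‖q + t • v‖ + ‖q‖ := norm_sub_le _ _
    nlinarith [norm_nonneg (q + t • v), norm_nonneg p]
  set K : ℝ := C * (2 + ‖p‖) ^ 3 with hKdef
  have hK0 : 0 ≤ K := by positivity
  -- master derivative bound on the ball
  have hbound1 : ∀ q ∈ Metric.ball p (1:ℝ), ∀ t : ℝ,
      ‖fderiv ℝ (⇑f) (q + t • v)‖ ≤ K / (1 + |t|) ^ 3 := by
    intro q hq t
    have hpos : (0:ℝ) < (1 + |t|) ^ 3 := by positivity
    rw [le_div_iff₀ hpos]
    have hg := hgeom q hq t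
    calc ‖fderiv ℝ (⇑f) (q + t • v)‖ * (1 + |t|) ^ 3
        ≤ ‖fderiv ℝ (⇑f) (q + t • v)‖ * ((2 + ‖p‖) * (1 + ‖q + t • v‖)) ^ 3 := by
          gcongr
      _ = (1 + ‖q + t • v‖) ^ 3 * ‖fderiv ℝ (⇑f) (q + t • v)‖ * (2 + ‖p‖) ^ 3 := by ring
      _ ≤ C * (2 + ‖p‖) ^ 3 := by
          gcongr
          exact hdecay1 _
      _ = K := rfl
  have hbound0 : ∀ q ∈ Metric.ball p (1:ℝ), ∀ t : ℝ,
      ‖f (q + t • v)‖ ≤ K / (1 + |t|) ^ 3 := by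
    intro q hq t
    have hpos : (0:ℝ) < (1 + |t|) ^ 3 := by positivity
    rw [le_div_iff₀ hpos]
    have hg := hgeom q hq t
    calc ‖f (q + t • v)‖ * (1 + |t|) ^ 3
        ≤ ‖f (q + t • v)‖ * ((2 + ‖p‖) * (1 + ‖q + t • v‖)) ^ 3 := by
          gcongr
      _ = (1 + ‖q + t • v‖) ^ 3 * ‖f (q + t • v)‖ * (2 + ‖p‖) ^ 3 := by ring
      _ ≤ C * (2 + ‖p‖) ^ 3 := by
          gcongr
          exact hdecay0 _
      _ = K := rfl
  have hpball : p ∈ Metric.ball p (1:ℝ) := Metric.mem_ball_self one_pos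
  -- the integrable majorant
  set B : ℝ → ℝ := fun t => (1 + ‖p‖) * K / (1 + t ^ 2) with hBdef
  have hmaster : ∀ t : ℝ, (1 + ‖p‖ + |t|) * (K / (1 + |t|) ^ 3) ≤ B t := by
    intro t
    have h1 : (0:ℝ) < (1 + |t|) ^ 3 := by positivity
    have h2 : (0:ℝ) < 1 + t ^ 2 := by positivity
    rw [hBdef, mul_div_assoc', div_le_div_iff₀ h1 h2]
    have hpoly : (1 + ‖p‖ + |t|) * (1 + t ^ 2) ≤ (1 + ‖p‖) * (1 + |t|) ^ 3 := by
      nlinarith [abs_nonneg t, norm_nonneg p, sq_abs t,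
        mul_nonneg (norm_nonneg p) (abs_nonneg t), sq_nonneg t,
        mul_nonneg (norm_nonneg p) (sq_nonneg t),
        mul_nonneg (mul_nonneg (norm_nonneg p) (abs_nonneg t)) (sq_nonneg t)]
    calc (1 + ‖p‖ + |t|) * K * (1 + t ^ 2) = K * ((1 + ‖p‖ + |t|) * (1 + t ^ 2)) := by ring
      _ ≤ K * ((1 + ‖p‖) * (1 + |t|) ^ 3) := by
          exact mul_le_mul_of_nonneg_left hpoly hK0
      _ = (1 + ‖p‖) * K * (1 + |t|) ^ 3 := by ring
  have hfac : ∀ t : ℝ, (0:ℝ) ≤ K / (1 + |t|) ^ 3 := fun t => by positivity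
  have hB_int : Integrable B := by
    simpa [hBdef, div_eq_mul_inv] using integrable_inv_one_add_sq.const_mul ((1 + ‖p‖) * K)
  have hB_top : Filter.Tendsto B Filter.atTop (nhds 0) := by
    have h : Filter.Tendsto (fun t : ℝ => 1 + t ^ 2) Filter.atTop Filter.atTop :=
      Filter.tendsto_atTop_add_const_left _ 1 (Filter.tendsto_pow_atTop (by norm_num))
    simpa [hBdef, div_eq_mul_inv] using h.inv_tendsto_atTop.const_mul ((1 + ‖p‖) * K)
  have hB_bot : Filter.Tendsto B Filter.atBot (nhds 0) := by
    have := hB_top.comp Filter.tendsto_neg_atBot_atTop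
    simpa [hBdef, Function.comp_def, neg_sq] using this
  -- continuity facts
  have hcurve : Continuous fun t : ℝ => p + t • v :=
    continuous_const.add (continuous_id.smul continuous_const)
  have hfc : Continuous (fderiv ℝ (⇑f)) := (f.smooth ⊤).continuous_fderiv (by norm_num)
  set L : ℝ → (EuclideanSpace ℝ (Fin d) →L[ℝ] ℂ) := fun t => fderiv ℝ (⇑f) (p + t • v) with hLdef
  set g : ℝ → ℂ := fun t => f (p + t • v) with hgdef
  have hLc : Continuous L := hfc.comp hcurve
  have hgc : Continuous g := f.continuous.comp hcurve
  -- norm bounds at p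
  have hLnorm : ∀ t : ℝ, ‖L t‖ ≤ K / (1 + |t|) ^ 3 := fun t => hbound1 p hpball t
  have hgnorm : ∀ t : ℝ, ‖g t‖ ≤ K / (1 + |t|) ^ 3 := fun t => hbound0 p hpball t
  have hone : ∀ t : ℝ, (1:ℝ) ≤ 1 + ‖p‖ + |t| := fun t => by
    have := norm_nonneg p; have := abs_nonneg t; linarith
  have hLB : ∀ t : ℝ, ‖L t‖ ≤ B t := fun t =>
    le_trans (hLnorm t) (le_trans (by nlinarith [hfac t, hone t, hLnorm t]) (hmaster t))
  have hgB : ∀ t : ℝ, ‖g t‖ ≤ B t := fun t =>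
    le_trans (hgnorm t) (le_trans (by nlinarith [hfac t, hone t]) (hmaster t))
  have hLvB : ∀ t : ℝ, ‖L t v‖ ≤ B t := fun t =>
    le_trans (le_trans ((L t).le_opNorm v) (by rw [hv, mul_one])) (hLB t)
  have htLvB : ∀ t : ℝ, ‖t • L t v‖ ≤ B t := by
    intro t
    rw [norm_smul, Real.norm_eq_abs]
    calc |t| * ‖L t v‖ ≤ |t| * (K / (1 + |t|) ^ 3) := by
          gcongr
          exact le_trans ((L t).le_opNorm v) (by rw [hv, mul_one]; exact hLnorm t)
      _ ≤ (1 + ‖p‖ + |t|) * (K / (1 + |t|) ^ 3) := by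
          gcongr
          have := norm_nonneg p; linarith
      _ ≤ B t := hmaster t
  have htgB : ∀ t : ℝ, ‖t • g t‖ ≤ B t := by
    intro t
    rw [norm_smul, Real.norm_eq_abs]
    calc |t| * ‖g t‖ ≤ |t| * (K / (1 + |t|) ^ 3) := by gcongr; exact hgnorm t
      _ ≤ (1 + ‖p‖ + |t|) * (K / (1 + |t|) ^ 3) := by
          gcongr
          have := norm_nonneg p; linarith
      _ ≤ B t := hmaster t
  have hLpB : ∀ t : ℝ, ‖L t (p + t • v)‖ ≤ B t := by
    intro t
    calc ‖L t (p + t • v)‖ ≤ ‖L t‖ * ‖p + t • v‖ := (L t).le_opNorm _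
      _ ≤ (K / (1 + |t|) ^ 3) * (‖p‖ + |t|) := by
          refine mul_le_mul (hLnorm t) ?_ (norm_nonneg _) (hfac t)
          calc ‖p + t • v‖ ≤ ‖p‖ + ‖t • v‖ := norm_add_le _ _
            _ = ‖p‖ + |t| := by rw [norm_smul, hv, mul_one, Real.norm_eq_abs]
      _ ≤ (1 + ‖p‖ + |t|) * (K / (1 + |t|) ^ 3) := by
          rw [mul_comm]
          gcongr
          linarith
      _ ≤ B t := hmaster t
  -- integrability
  have hL_int : Integrable L := Integrable.mono' hB_int hLc.aestronglyMeasurable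
    (Filter.Eventually.of_forall hLB)
  have hg_int : Integrable g := Integrable.mono' hB_int hgc.aestronglyMeasurable
    (Filter.Eventually.of_forall hgB)
  have hLv_int : Integrable (fun t => L t v) := Integrable.mono' hB_int
    ((hLc.clm_apply continuous_const).aestronglyMeasurable) (Filter.Eventually.of_forall hLvB)
  have htLv_int : Integrable (fun t => t • L t v) := Integrable.mono' hB_int
    ((continuous_id.smul (hLc.clm_apply continuous_const)).aestronglyMeasurable)
    (Filter.Eventually.of_forall htLvB)
  have hLp_int : Integrable (fun t => L t (p + t • v)) := Integrable.mono' hB_int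
    ((hLc.clm_apply hcurve).aestronglyMeasurable) (Filter.Eventually.of_forall hLpB)
  -- differentiation under the integral sign
  have hdiffF : ∀ (t : ℝ) (q : EuclideanSpace ℝ (Fin d)),
      HasFDerivAt (fun q : EuclideanSpace ℝ (Fin d) => f (q + t • v)) (fderiv ℝ (⇑f) (q + t • v)) q := by
    intro t q
    have h1 : HasFDerivAt (fun q : EuclideanSpace ℝ (Fin d) => q + t • v) (ContinuousLinearMap.id ℝ (EuclideanSpace ℝ (Fin d))) q :=
      (hasFDerivAt_id q).add_const (t • v)
    have h2 := (f.differentiable (q + t • v)).hasFDerivAt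
    have h3 := h2.comp q h1
    rw [ContinuousLinearMap.comp_id] at h3
    exact h3
  have key : HasFDerivAt (fun q : EuclideanSpace ℝ (Fin d) => ∫ t : ℝ, f (q + t • v)) (∫ t : ℝ, L t) p := by
    refine hasFDerivAt_integral_of_dominated_of_fderiv_le (s := Metric.ball p 1)
      (F := fun q t => f (q + t • v)) (F' := fun q t => fderiv ℝ (⇑f) (q + t • v)) (Metric.ball_mem_nhds p one_pos)
      (Filter.Eventually.of_forall fun q =>
        (f.continuous.comp (continuous_const.add
          (continuous_id.smul continuous_const))).aestronglyMeasurable)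
      hg_int hLc.aestronglyMeasurable
      (Filter.Eventually.of_forall fun t q hq =>
        le_trans (hbound1 q hq t)
          (le_trans (by nlinarith [hfac t, hone t]) (hmaster t)))
      hB_int
      (Filter.Eventually.of_forall fun t q _ => hdiffF t q)
  have hfder : fderiv ℝ (fun q : EuclideanSpace ℝ (Fin d) => ∫ t : ℝ, f (q + t • v)) p = ∫ t : ℝ, L t := key.fderiv
  -- FTC
  have ftc : ∀ (G G' : ℝ → ℂ), (∀ t, HasDerivAt G (G' t) t) → Integrable G' →
      Filter.Tendsto G Filter.atTop (nhds 0) → Filter.Tendsto G Filter.atBot (nhds 0) →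
      ∫ t : ℝ, G' t = 0 := by
    intro G G' hd hi ht hb
    have h1 := integral_Ioi_of_hasDerivAt_of_tendsto' (a := 0) (fun x _ => hd x)
      hi.integrableOn ht
    have h2 := integral_Iic_of_hasDerivAt_of_tendsto' (a := 0) (fun x _ => hd x)
      hi.integrableOn hb
    rw [← intervalIntegral.integral_Iic_add_Ioi (b := (0:ℝ)) hi.integrableOn hi.integrableOn,
      h1, h2]
    ring
  have hgd : ∀ t : ℝ, HasDerivAt g (L t v) t := by
    intro t
    have hcurve' : HasDerivAt (fun s : ℝ => p + s • v) v t := by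
      simpa using ((hasDerivAt_id t).smul_const v).const_add p
    exact ((f.differentiable (p + t • v)).hasFDerivAt).comp_hasDerivAt t hcurve'
  have hg_top : Filter.Tendsto g Filter.atTop (nhds 0) := squeeze_zero_norm hgB hB_top
  have hg_bot : Filter.Tendsto g Filter.atBot (nhds 0) := squeeze_zero_norm hgB hB_bot
  have hIv : ∫ t : ℝ, L t v = 0 := ftc g _ hgd hLv_int hg_top hg_bot
  -- integration by parts : ∫ t • (L t v) = - ∫ g
  have htgd : ∀ t : ℝ, HasDerivAt (fun s : ℝ => s • g s) (g t + t • L t v) t := by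
    intro t
    exact ((hasDerivAt_id t).smul (hgd t)).congr_deriv (by simp [add_comm])
  have htg_top : Filter.Tendsto (fun s : ℝ => s • g s) Filter.atTop (nhds 0) :=
    squeeze_zero_norm htgB hB_top
  have htg_bot : Filter.Tendsto (fun s : ℝ => s • g s) Filter.atBot (nhds 0) :=
    squeeze_zero_norm htgB hB_bot
  have hItg : ∫ t : ℝ, (g t + t • L t v) = 0 :=
    ftc _ _ htgd (hg_int.add htLv_int) htg_top htg_bot
  have hparts : ∫ t : ℝ, t • L t v = - ∫ t : ℝ, g t := by
    have h := hItg
    rw [integral_add hg_int htLv_int] at h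
    linear_combination h
  constructor
  · intro i
    rw [hfder, ContinuousLinearMap.integral_apply hL_int,
      ContinuousLinearMap.integral_apply hL_int, hIv, mul_zero, sub_zero]
  · rw [hfder, ContinuousLinearMap.integral_apply hL_int]
    have hpt : ∀ t : ℝ, L t p = L t (p + t • v) - t • L t v := by
      intro t
      calc L t p = L t ((p + t • v) - t • v) := by rw [add_sub_cancel_right]
        _ = L t (p + t • v) - t • L t v := by rw [map_sub, _root_.map_smul]
    calc ∫ t : ℝ, L t p = ∫ t : ℝ, (L t (p + t • v) - t • L t v) := by simp_rw [hpt]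
      _ = (∫ t : ℝ, L t (p + t • v)) - ∫ t : ℝ, t • L t v :=
          integral_sub hLp_int htLv_int
      _ = (∫ t : ℝ, L t (p + t • v)) + ∫ t : ℝ, g t := by rw [hparts]; ring
      _ = ∫ t : ℝ, (L t (p + t • v) + g t) := (integral_add hLp_int hg_int).symm
end
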